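/- If G is a finite forest (contains no cycle), then wcol_r(G) ≤ r + 1 for every r ≥ 1. -/
import Mathlib


open SimpleGraph

variable {V : Type} [Fintype V]

def WReach (G : SimpleGraph V) (L : LinearOrder V) (r : ℕ) (v : V) : Set V :=
  {u | ∃ p : G.Walk v u, p.IsPath ∧ p.length ≤ r ∧ ∀ w ∈ p.support, L.le u w}

def SReach (G : SimpleGraph V) (L : LinearOrder V) (r : ℕ) (v : V) : Set V :=
  {u | ∃ p : G.Walk v u, p.IsPath ∧ p.length ≤ r ∧ L.le u v ∧
    ∀ w ∈ p.support, w ≠ u → w ≠ v → L.lt v w}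

noncomputable def wcol (G : SimpleGraph V) (r : ℕ) : ℕ :=
  sInf {k | ∃ L : LinearOrder V, ∀ v, (WReach G L r v).ncard ≤ k}

noncomputable def col (G : SimpleGraph V) (r : ℕ) : ℕ :=
  sInf {k | ∃ L : LinearOrder V, ∀ v, (SReach G L r v).ncard ≤ k}

namespace WcolAux

variable (G : SimpleGraph V)

/-- A canonical representative of the connected component of `v`. -/
noncomputable def root (v : V) : V := (G.connectedComponentMk v).out

/-- Distance to the component representative. -/
noncomputable def depth (v : V) : ℕ := G.dist v (root G v)

lemma reachable_root (v : V) : G.Reachable v (root G v) := by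
  have h : G.connectedComponentMk ((G.connectedComponentMk v).out) =
      G.connectedComponentMk v := (G.connectedComponentMk v).out_eq
  exact (ConnectedComponent.eq.mp h).symm

lemma root_eq_of_reachable {v w : V} (h : G.Reachable v w) : root G v = root G w := by
  unfold root
  rw [ConnectedComponent.eq.mpr h]

/-- In an acyclic graph every path realizes the distance between its endpoints. -/
lemma length_eq_dist (hG : G.IsAcyclic) {a b : V} (p : G.Walk a b) (hp : p.IsPath) :
    p.length = G.dist a b := by
  classical
  obtain ⟨q, hq⟩ := Reachable.exists_walk_length_eq_dist (⟨p⟩ : G.Reachable a b)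
  have h1 : p = q.bypass := by
    have h := hG.path_unique ⟨p, hp⟩ ⟨q.bypass, q.bypass_isPath⟩
    exact congrArg Subtype.val h
  have h2 : q.bypass.length ≤ q.length := q.length_bypass_le
  have h3 := SimpleGraph.dist_le p
  have h4 : p.length = q.bypass.length := congrArg Walk.length h1
  omega

/-- Adjacent vertices have depths differing by exactly one. -/
lemma adj_depth (hG : G.IsAcyclic) {v w : V} (h : G.Adj v w) :
    depth G v = depth G w + 1 ∨ depth G w = depth G v + 1 := by
  classical
  obtain ⟨p, hplen⟩ := Reachable.exists_walk_length_eq_dist (reachable_root G v)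
  set q := p.bypass with hqdef
  have hq : q.IsPath := p.bypass_isPath
  have hqlen : q.length = depth G v := length_eq_dist G hG q hq
  have hroot : root G w = root G v := (root_eq_of_reachable G h.symm.reachable)
  have hdw : depth G w = G.dist w (root G v) := by
    unfold depth; rw [hroot]
  by_cases hw : w ∈ q.support
  · left
    have h1 : (q.takeUntil w hw).length = G.dist v w :=
      length_eq_dist G hG _ (hq.takeUntil hw)
    have hvw : G.dist v w = 1 := by
      have hsingle : (Walk.cons h Walk.nil).IsPath := by
        simp [Walk.cons_isPath_iff, h.ne]
      have := length_eq_dist G hG (Walk.cons h Walk.nil) hsingle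
      simpa using this.symm
    have h2 : (q.dropUntil w hw).length = G.dist w (root G v) :=
      length_eq_dist G hG _ (hq.dropUntil hw)
    have h3 : (q.takeUntil w hw).length + (q.dropUntil w hw).length = q.length := by
      rw [← Walk.length_append, q.take_spec hw]
    rw [hdw]
    omega
  · right
    have hpath : (Walk.cons h.symm q).IsPath := hq.cons hw
    have := length_eq_dist G hG (Walk.cons h.symm q) hpath
    rw [hdw]
    simp only [Walk.length_cons] at this
    omega

/-- Unique parent: two neighbours of `v` of smaller depth coincide. -/
lemma parent_unique (hG : G.IsAcyclic) {v w1 w2 : V} (h1 : G.Adj v w1) (h2 : G.Adj v w2)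
    (d1 : depth G w1 < depth G v) (d2 : depth G w2 < depth G v) : w1 = w2 := by
  classical
  have hr1 : root G w1 = root G v := root_eq_of_reachable G h1.symm.reachable
  have hr2 : root G w2 = root G v := root_eq_of_reachable G h2.symm.reachable
  have hreach1 : G.Reachable w1 (root G v) := hr1 ▸ reachable_root G w1
  have hreach2 : G.Reachable w2 (root G v) := hr2 ▸ reachable_root G w2
  obtain ⟨p1, hp1len⟩ := Reachable.exists_walk_length_eq_dist hreach1
  obtain ⟨p2, hp2len⟩ := Reachable.exists_walk_length_eq_dist hreach2
  have hd1 : G.dist w1 (root G v) = depth G w1 := by unfold depth; rw [hr1]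
  have hd2 : G.dist w2 (root G v) = depth G w2 := by unfold depth; rw [hr2]
  -- replace by bypasses (paths)
  have key : ∀ (w : V) (hadj : G.Adj v w) (p : G.Walk w (root G v)),
      p.IsPath → p.length = depth G w → depth G w < depth G v →
      (Walk.cons hadj p).IsPath := by
    intro w hadj p hp hlen hdlt
    refine hp.cons ?_
    intro hv
    have hsplit : (p.takeUntil v hv).length + (p.dropUntil v hv).length = p.length := by
      rw [← Walk.length_append, p.take_spec hv]
    have := SimpleGraph.dist_le (p.dropUntil v hv)
    have hdepthv : G.dist v (root G v) = depth G v := rfl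
    omega
  have hq1 : (Walk.cons h1 p1.bypass).IsPath := by
    refine key w1 h1 p1.bypass p1.bypass_isPath ?_ d1
    rw [length_eq_dist G hG p1.bypass p1.bypass_isPath, hd1]
  have hq2 : (Walk.cons h2 p2.bypass).IsPath := by
    refine key w2 h2 p2.bypass p2.bypass_isPath ?_ d2
    rw [length_eq_dist G hG p2.bypass p2.bypass_isPath, hd2]
  have := hG.path_unique ⟨Walk.cons h1 p1.bypass, hq1⟩ ⟨Walk.cons h2 p2.bypass, hq2⟩
  have hval : Walk.cons h1 p1.bypass = Walk.cons h2 p2.bypass := congrArg Subtype.val this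
  have := congrArg (fun q => q.getVert 1) hval
  simpa [Walk.getVert_cons_succ, Walk.getVert_zero] using this

/-- Depths change by at most one per step along a walk. -/
lemma depth_le (hG : G.IsAcyclic) {v u : V} (p : G.Walk v u) :
    depth G v ≤ depth G u + p.length := by
  induction p with
  | nil => simp
  | cons h q ih =>
    rcases adj_depth G hG h with h' | h' <;> simp [Walk.length_cons] <;> omega

/-- If the endpoint of a path is of minimum depth among its support, then
depths strictly decrease along the path. -/
lemma descend (hG : G.IsAcyclic) {v u : V} (p : G.Walk v u) (hp : p.IsPath)
    (hmin : ∀ w ∈ p.support, depth G u ≤ depth G w) :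
    depth G v = depth G u + p.length := by
  induction p with
  | nil => simp
  | @cons v w u h q ih =>
    have hq : depth G w = depth G u + q.length :=
      ih hp.of_cons (fun x hx => hmin x (by simp [hx]))
    have hv : depth G u ≤ depth G v := hmin v (Walk.start_mem_support _)
    rcases adj_depth G hG h with h' | h'
    · simp [Walk.length_cons]; omega
    · -- depth w = depth v + 1 : impossible
      exfalso
      cases q with
      | nil => simp at hq; omega
      | cons h' q' =>
        rename_i x
        have hF : depth G x ≤ depth G u + q'.length := depth_le G hG q'
        simp [Walk.length_cons] at hq
        -- depth x = depth w - 1 and depth v = depth w - 1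
        rcases adj_depth G hG h' with hwx | hwx
        · -- depth w = depth x + 1
          have hxv : x = v := by
            refine parent_unique G hG h' h.symm ?_ ?_ <;> omega
          have : v ∉ (Walk.cons h' q').support := by
            have := hp.2
            simp only [Walk.support_cons, List.nodup_cons] at this
            exact this.1
          have hxmem : x ∈ (Walk.cons h' q').support := by
            rw [Walk.support_cons]
            exact List.mem_cons_of_mem _ q'.start_mem_support
          exact this (hxv ▸ hxmem)
        · omega

/-- Along strictly descending paths of equal length from `v`, endpoints agree. -/
lemma descend_unique (hG : G.IsAcyclic) :
    ∀ (k : ℕ) {v u u' : V} (p : G.Walk v u) (p' : G.Walk v u'),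
      p.IsPath → p'.IsPath → p.length = k → p'.length = k →
      depth G v = depth G u + k → depth G v = depth G u' + k → u = u' := by
  intro k
  induction k with
  | zero =>
    intro v u u' p p' _ _ hl hl' _ _
    have h1 : v = u := Walk.eq_of_length_eq_zero hl
    have h2 : v = u' := Walk.eq_of_length_eq_zero hl'
    rw [← h1, ← h2]
  | succ k ih =>
    intro v u u' p p' hp hp' hl hl' hd hd'
    cases p with
    | nil => simp at hl
    | cons h q =>
      rename_i w
      cases p' with
      | nil => simp at hl'
      | cons h' q' =>
        rename_i w'
        simp only [Walk.length_cons, Nat.succ.injEq] at hl hl'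
        have hFq : depth G w ≤ depth G u + q.length := depth_le G hG q
        have hFq' : depth G w' ≤ depth G u' + q'.length := depth_le G hG q'
        have hw : depth G w = depth G u + k := by
          rcases adj_depth G hG h with h1 | h1 <;> omega
        have hw' : depth G w' = depth G u' + k := by
          rcases adj_depth G hG h' with h1 | h1 <;> omega
        have hww : w = w' := by
          refine parent_unique G hG h h' ?_ ?_ <;> omega
        subst hww
        exact ih q q' hp.of_cons hp'.of_cons hl hl' (by omega) (by omega)

end WcolAux

theorem wcol_le_of_acyclic (G : SimpleGraph V) (hG : G.IsAcyclic) (r : ℕ) (hr : 1 ≤ r) :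
    wcol G r ≤ r + 1 := by
  classical
  open WcolAux in
  let e := Fintype.equivFin V
  let f : V → ℕ ×ₗ Fin (Fintype.card V) := fun v => toLex (depth G v, e v)
  have hf : Function.Injective f := by
    intro a b hab
    have h2 := congrArg (fun x => (ofLex x).2) hab
    exact e.injective h2
  let L : LinearOrder V := LinearOrder.lift' f hf
  have hle : ∀ a b : V, L.le a b → depth G a ≤ depth G b := by
    intro a b h
    have hfab : f a ≤ f b := h
    exact Prod.Lex.monotone_fst (f a) (f b) hfab
  apply Nat.sInf_le
  refine ⟨L, fun v => ?_⟩
  -- for each u in WReach, record its key facts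
  have hkey : ∀ u ∈ WReach G L r v,
      G.dist v u ≤ r ∧ depth G v = depth G u + G.dist v u ∧
        ∃ p : G.Walk v u, p.IsPath ∧ p.length = G.dist v u := by
    intro u hu
    obtain ⟨p, hp, hlen, hmin⟩ := hu
    have hld : p.length = G.dist v u := length_eq_dist G hG p hp
    have hdescend : depth G v = depth G u + p.length :=
      descend G hG p hp (fun w hw => hle u w (hmin w hw))
    exact ⟨hld ▸ hlen, hld ▸ hdescend, p, hp, hld⟩
  have hmaps : ∀ u ∈ WReach G L r v, G.dist v u ∈ (↑(Finset.range (r + 1)) : Set ℕ) := by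
    intro u hu
    have := (hkey u hu).1
    simp [Finset.mem_range]
    omega
  have hinj : Set.InjOn (G.dist v) (WReach G L r v) := by
    intro u1 h1 u2 h2 hdist
    obtain ⟨_, hd1, p1, hp1, hl1⟩ := hkey u1 h1
    obtain ⟨_, hd2, p2, hp2, hl2⟩ := hkey u2 h2
    exact descend_unique G hG (G.dist v u1) p1 p2 hp1 hp2 hl1 (hdist ▸ hl2)
      hd1 (hdist ▸ hd2)
  calc (WReach G L r v).ncard ≤ (↑(Finset.range (r + 1)) : Set ℕ).ncard :=
        Set.ncard_le_ncard_of_injOn _ hmaps hinj (Finset.finite_toSet _)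
    _ = r + 1 := by rw [Set.ncard_coe_finset, Finset.card_range]
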